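/- Let f(λ,z) = (1/z)·g((ln z − ln λ − m)/√Σ)/√Σ be the lognormal density of Z^x = x e^Y with Y ~ N(m,Σ), viewed as a function of x = λ > 0 (g the standard normal density). Then the k-th partial derivative in x satisfies ∇_x^k f(x,z) = [Σ_{i=0}^{k} a_i^k d(x,z)^i] f(x,z)/x^k, where d(x,z) = (ln z − ln x − m)/Σ and the coefficients satisfy the recursion a_i^0 = 1_{i=0}, a_i^{j+1} = a_{i−1}^j − j a_i^j − ((i+1)/Σ) a_{i+1}^j, with a_i^j = 0 for i < 0 or i > j. -/

import Mathlib

/-!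
If `f' = d f / x` and `d' = -c / x` on `(0, ∞)`, differentiating `P(d) f / x^k` gives
`((X - k) P - c P')(d) f / x^(k+1)`, so the `k`-th derivative of `f` is `P_k(d) f / x^k` for a
polynomial `P_k` defined by this recursion. The lognormal density satisfies both equations with
`d = (ln z - ln x - m) / Σ` and `c = Σ⁻¹`, and the recursion on the coefficients of `P_k` is the
recursion defining `a`.
-/

open Real Polynomial Finset

noncomputable def lognormalDerivPoly (c : ℝ) : ℕ → ℝ[X]
  | 0 => 1
  | k + 1 => X * lognormalDerivPoly c k - C (k : ℝ) * lognormalDerivPoly c k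
      - C c * derivative (lognormalDerivPoly c k)

namespace lognormalDerivPoly

variable (c : ℝ)

theorem natDegree_le (k : ℕ) : (lognormalDerivPoly c k).natDegree ≤ k := by
  induction k with
  | zero => simp [lognormalDerivPoly]
  | succ k ih =>
    have hX : (X * lognormalDerivPoly c k).natDegree ≤ k + 1 :=
      (natDegree_mul_le_of_le natDegree_X_le ih).trans (by omega)
    have hC : (C (k : ℝ) * lognormalDerivPoly c k).natDegree ≤ k :=
      (natDegree_C_mul_le _ _).trans ih
    have hD : (C c * derivative (lognormalDerivPoly c k)).natDegree ≤ k :=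
      ((natDegree_C_mul_le _ _).trans (natDegree_derivative_le _)).trans (by omega)
    exact (natDegree_sub_le_of_le (natDegree_sub_le_of_le hX hC) hD).trans (by omega)

theorem coeff_eq {a : ℕ → ℕ → ℝ} (ha0 : ∀ i, a 0 i = if i = 0 then 1 else 0)
    (harec : ∀ j i, a (j + 1) i =
      (if i = 0 then 0 else a j (i - 1)) - j * a j i - (i + 1) * c * a j (i + 1))
    (k i : ℕ) : (lognormalDerivPoly c k).coeff i = a k i := by
  induction k generalizing i with
  | zero => simp [lognormalDerivPoly, coeff_one, ha0]
  | succ k ih =>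
    rw [harec]
    rcases i with _ | i
    · simp only [lognormalDerivPoly, coeff_sub, coeff_X_mul_zero, coeff_C_mul, coeff_derivative,
        ih, if_pos]
      push_cast
      ring
    · simp only [lognormalDerivPoly, coeff_sub, coeff_X_mul, coeff_C_mul, coeff_derivative, ih,
        i.succ_ne_zero, if_false, Nat.add_sub_cancel]
      push_cast
      ring

end lognormalDerivPoly

theorem iteratedDeriv_eq_eval_lognormalDerivPoly {f d : ℝ → ℝ} {c : ℝ}
    (hf : ∀ x, 0 < x → HasDerivAt f (d x * f x / x) x)
    (hd : ∀ x, 0 < x → HasDerivAt d (-c / x) x) (k : ℕ) {x : ℝ} (hx : 0 < x) :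
    iteratedDeriv k f x = (lognormalDerivPoly c k).eval (d x) * f x / x ^ k := by
  induction k generalizing x with
  | zero => simp [lognormalDerivPoly]
  | succ k ih =>
    have hloc : iteratedDeriv k f =ᶠ[nhds x]
        fun y => (lognormalDerivPoly c k).eval (d y) * f y / y ^ k :=
      Filter.eventually_of_mem (Ioi_mem_nhds hx) fun y hy => ih hy
    have hderiv : HasDerivAt (fun y => (lognormalDerivPoly c k).eval (d y) * f y / y ^ k)
        ((lognormalDerivPoly c (k + 1)).eval (d x) * f x / x ^ (k + 1)) x := by
      refine ((((lognormalDerivPoly c k).hasDerivAt (d x)).comp x (hd x hx)).mul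
        (hf x hx)).div (hasDerivAt_pow k x) (pow_ne_zero k hx.ne') |>.congr_deriv ?_
      simp only [lognormalDerivPoly, eval_sub, eval_mul, eval_X, eval_C, Function.comp_apply,
        Pi.mul_apply]
      rcases k with _ | k
      · field_simp
        ring
      · simp only [Nat.add_sub_cancel, Nat.cast_succ]
        field_simp
        ring
    rw [iteratedDeriv_succ, hloc.deriv_eq, hderiv.deriv]

theorem hasDerivAt_log_standardized (L m Sig : ℝ) {x : ℝ} (hx : x ≠ 0) :
    HasDerivAt (fun y => (L - log y - m) / Sig) (-Sig⁻¹ / x) x := by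
  refine ((((hasDerivAt_log hx).const_sub L).sub_const m).div_const Sig).congr_deriv ?_
  ring

theorem hasDerivAt_lognormal_density (K L m Sig : ℝ) {x : ℝ} (hx : x ≠ 0) :
    HasDerivAt (fun y => K * exp (-(L - log y - m) ^ 2 / (2 * Sig)))
      ((L - log x - m) / Sig * (K * exp (-(L - log x - m) ^ 2 / (2 * Sig))) / x) x := by
  refine ((((((hasDerivAt_log hx).const_sub L).sub_const m).fun_pow 2).fun_neg.div_const
    (2 * Sig)).exp.const_mul K).congr_deriv ?_
  ring

theorem lognormal_density_derivatives_general (m Sig : ℝ)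
    (a : ℕ → ℕ → ℝ)
    (ha0 : ∀ i, a 0 i = if i = 0 then 1 else 0)
    (harec : ∀ j i, a (j + 1) i =
      (if i = 0 then 0 else a j (i - 1)) - j * a j i - ((i + 1) / Sig) * a j (i + 1)) :
    ∀ k : ℕ, ∀ x : ℝ, 0 < x → ∀ z : ℝ, 0 < z →
      iteratedDeriv k
          (fun x' => (1 / (z * Real.sqrt (2 * π * Sig))) *
            Real.exp (-(Real.log z - Real.log x' - m) ^ 2 / (2 * Sig))) x
        = (∑ i ∈ Finset.range (k + 1),
            a k i * ((Real.log z - Real.log x - m) / Sig) ^ i) *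
          ((1 / (z * Real.sqrt (2 * π * Sig))) *
            Real.exp (-(Real.log z - Real.log x - m) ^ 2 / (2 * Sig))) / x ^ k := by
  intro k x hx z _
  rw [iteratedDeriv_eq_eval_lognormalDerivPoly
      (fun y hy => hasDerivAt_lognormal_density _ _ m Sig hy.ne')
      (fun y hy => hasDerivAt_log_standardized _ m Sig hy.ne') k hx,
    eval_eq_sum_range' (Nat.lt_succ_of_le (lognormalDerivPoly.natDegree_le _ k))]
  simp only [lognormalDerivPoly.coeff_eq Sig⁻¹ ha0 (fun j i => by rw [harec, div_eq_mul_inv])]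

/-- for the lognormal density
f(x,z) = (1/(z√(2πΣ))) exp(−(ln z − ln x − m)²/(2Σ)) of Z^x = x e^Y, Y ~ N(m,Σ),
the k-th derivative in x satisfies
∇ₓᵏ f(x,z) = [Σ_{i=0}^k aᵢᵏ d(x,z)ⁱ] f(x,z)/xᵏ with d(x,z) = (ln z − ln x − m)/Σ and
coefficients given by a_i^0 = 1_{i=0},
a_i^{j+1} = a_{i−1}^j − j a_i^j − ((i+1)/Σ) a_{i+1}^j (zero outside 0 ≤ i ≤ j). -/
theorem lognormal_density_derivatives (m Sig : ℝ) (hSig : 0 < Sig)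
    (a : ℕ → ℕ → ℝ)
    (ha0 : ∀ i, a 0 i = if i = 0 then 1 else 0)
    (harec : ∀ j i, a (j + 1) i =
      (if i = 0 then 0 else a j (i - 1)) - j * a j i - ((i + 1) / Sig) * a j (i + 1)) :
    ∀ k : ℕ, ∀ x : ℝ, 0 < x → ∀ z : ℝ, 0 < z →
      iteratedDeriv k
          (fun x' => (1 / (z * Real.sqrt (2 * π * Sig))) *
            Real.exp (-(Real.log z - Real.log x' - m) ^ 2 / (2 * Sig))) x
        = (∑ i ∈ Finset.range (k + 1),
            a k i * ((Real.log z - Real.log x - m) / Sig) ^ i) *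
          ((1 / (z * Real.sqrt (2 * π * Sig))) *
            Real.exp (-(Real.log z - Real.log x - m) ^ 2 / (2 * Sig))) / x ^ k :=
  lognormal_density_derivatives_general m Sig a ha0 harec
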